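/- Fix h > 0 and γ > 0, and for each N ∈ ℕ let (S_k^{(N)}, I_k^{(N)})_{k∈ℕ} be an instance of the discrete stochastic SIR model with total population N and infection parameter λ(N) ≥ 0. Assume N·λ(N) converges to some β ≥ 0 as N → ∞, and that the deterministic initial conditions satisfy S_0^{(N)}/N → s₀ and I_0^{(N)}/N → i₀ with s₀ > 0 and i₀ > 0. Then for every n ∈ ℕ there exist real numbers s_n and i_n such that 𝔼[S_n^{(N)}/N] → s_n and 𝔼[I_n^{(N)}/N] → i_n as N → ∞, and moreover S_n^{(N)}/N → s_n and I_n^{(N)}/N → i_n in probability as N → ∞. -/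

import Mathlib

/-!
Conditionally on `(S k, I k)`, the numbers of new infections and recoveries are independent
binomial counts `Bin(S k, 1 - e^{-λ I_k h})` and `Bin(I k, 1 - e^{-γh})`; their joint law is
computed by summing the product weights `bernoulliWeight` over infection and recovery sets.
Hence the conditional mean of `(S (k+1), I (k+1)) / N` differs from `sirStep (βh) (γh) (s_k, i_k)`
by at most a constant times `|S k / N - s_k| + |I k / N - i_k| + |Nλ - β|` (as `t ↦ e^{-t}` is
1-Lipschitz on `[0, ∞)`), and the conditional variance is at most `1 / (2N)`. By induction on `n`
the mean-square distance between `(S n, I n) / N` and `(s_n, i_n) = sirStep^[n] (s₀, i₀)` tends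
to `0` (at `n = 0` because the initial values are deterministic); this gives convergence of the
means and, by Chebyshev's inequality, convergence in probability.
-/

open MeasureTheory ProbabilityTheory Filter Real

/-- The filtration `𝓕_k = σ((S_j, I_j) : j ≤ k)` generated by the susceptible and infectious
counts up to time `k`. -/
def sirFiltration {Ω : Type*} (S I : ℕ → Ω → ℕ) (k : ℕ) : MeasurableSpace Ω :=
  ⨆ j ∈ Finset.range (k + 1),
    MeasurableSpace.comap (fun ω => (S j ω, I j ω)) inferInstance

/-- The discrete stochastic SIR model on one node with total population `N`, time step `h > 0`
and parameters `λ ≥ 0` (infection), `γ > 0` (recovery).  `S, I, R` are the susceptible,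
infectious and recovered counts; `X k i` and `Y k i` are the `{0,1}`-valued infection and
recovery indicators used in the step from time `k` to `k+1`.  Conditionally on
`𝓕_k = σ((S_j, I_j) : j ≤ k)`, the combined family `(X k i)_i, (Y k i)_i` is independent,
each `X k i` being Bernoulli of parameter `1 - e^{-λ I_k h}` and each `Y k i` Bernoulli of
parameter `1 - e^{-γ h}`; this is expressed by the product form of the conditional
probability of every joint configuration of values.  The initial values are deterministic. -/
def IsSIRModel {Ω : Type*} [MeasurableSpace Ω] (μ : Measure Ω)
    (N : ℕ) (h lam gam : ℝ)
    (S I R : ℕ → Ω → ℕ) (X Y : ℕ → ℕ → Ω → ℕ) : Prop :=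
  IsProbabilityMeasure μ ∧
  0 < h ∧ 0 ≤ lam ∧ 0 < gam ∧
  (∀ k ω, S k ω + I k ω + R k ω = N) ∧
  (∀ k i ω, X k i ω ≤ 1) ∧
  (∀ k i ω, Y k i ω ≤ 1) ∧
  (∀ k, Measurable (S k)) ∧ (∀ k, Measurable (I k)) ∧ (∀ k, Measurable (R k)) ∧
  (∀ k i, Measurable (X k i)) ∧ (∀ k i, Measurable (Y k i)) ∧
  (∀ ω ω', S 0 ω = S 0 ω' ∧ I 0 ω = I 0 ω' ∧ R 0 ω = R 0 ω') ∧
  (∀ k ω, S (k + 1) ω + (∑ i ∈ Finset.range (S k ω), X k i ω) = S k ω) ∧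
  (∀ k ω, I (k + 1) ω + (∑ i ∈ Finset.range (I k ω), Y k i ω)
      = I k ω + ∑ i ∈ Finset.range (S k ω), X k i ω) ∧
  (∀ k ω, R (k + 1) ω = R k ω + ∑ i ∈ Finset.range (I k ω), Y k i ω) ∧
  (∀ k : ℕ, ∀ a b : ℕ → ℕ, (∀ i, a i ≤ 1) → (∀ i, b i ≤ 1) →
    μ[Set.indicator {ω | ∀ i < N, X k i ω = a i ∧ Y k i ω = b i} (fun _ => (1 : ℝ))
        | sirFiltration S I k]
      =ᵐ[μ] fun ω =>
        (∏ i ∈ Finset.range N,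
          (if a i = 1 then 1 - exp (-(lam * (I k ω : ℝ) * h))
            else exp (-(lam * (I k ω : ℝ) * h)))) *
        (∏ i ∈ Finset.range N,
          (if b i = 1 then 1 - exp (-(gam * h)) else exp (-(gam * h)))))

open Finset

/-- Probability that a random subset of `t`, containing each element independently with
probability `x`, meets `t` exactly in `A`. -/
def bernoulliWeight (x : ℝ) (t A : Finset ℕ) : ℝ := ∏ j ∈ t, if j ∈ A then x else 1 - x

theorem sum_powerset_insert_bernoulliWeight_mul (x : ℝ) {a : ℕ} {t : Finset ℕ} (ha : a ∉ t)
    (F : Finset ℕ → ℝ) :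
    ∑ A ∈ (insert a t).powerset, bernoulliWeight x (insert a t) A * F A
      = ∑ A ∈ t.powerset, bernoulliWeight x t A * ((1 - x) * F A + x * F (insert a A)) := by
  have hA : ∀ A ∈ t.powerset, a ∉ A := fun A hA haA => ha (mem_powerset.mp hA haA)
  have weight_of_notMem : ∀ A ∈ t.powerset,
      bernoulliWeight x (insert a t) A = (1 - x) * bernoulliWeight x t A := by
    intro A hAt
    rw [bernoulliWeight, prod_insert ha, if_neg (hA A hAt), bernoulliWeight]
  have weight_insert : ∀ A ∈ t.powerset,
      bernoulliWeight x (insert a t) (insert a A) = x * bernoulliWeight x t A := by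
    intro A _
    rw [bernoulliWeight, prod_insert ha, if_pos (mem_insert_self a A), bernoulliWeight]
    congr 1
    refine prod_congr rfl fun j hj => ?_
    simp only [mem_insert, ne_of_mem_of_not_mem hj ha, false_or]
  rw [powerset_insert, sum_union, sum_image fun A hA' B hB' hAB => ?_]
  · rw [← sum_add_distrib]
    refine sum_congr rfl fun A hAt => ?_
    rw [weight_of_notMem A hAt, weight_insert A hAt]
    ring
  · simpa [erase_insert, hA A hA', hA B hB'] using congrArg (erase · a) hAB
  · refine disjoint_right.mpr fun A hA' hAt => ?_
    obtain ⟨B, -, rfl⟩ := mem_image.mp hA'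
    exact ha (mem_powerset.mp hAt (mem_insert_self a B))

/-- `#t * x` and `#t * x * (1 - x)` are the mean and variance of the binomial count `#A`. -/
theorem sum_bernoulliWeight_mul_sq (x d c : ℝ) (t : Finset ℕ) :
    ∑ A ∈ t.powerset, bernoulliWeight x t A * (d + c * #A) ^ 2
      = (d + c * (#t * x)) ^ 2 + c ^ 2 * (#t * x * (1 - x)) := by
  induction t using Finset.induction_on generalizing d with
  | empty => simp [bernoulliWeight]
  | @insert a t ha ih =>
    have hcard : ∀ A ∈ t.powerset,
        (d + c * #(insert a A)) ^ 2 = ((d + c) + c * #A) ^ 2 := fun A hA => by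
      rw [card_insert_of_notMem fun haA => ha (mem_powerset.mp hA haA)]
      push_cast; ring
    rw [sum_powerset_insert_bernoulliWeight_mul x ha]
    simp_rw [mul_add, sum_add_distrib, mul_left_comm _ x, mul_left_comm _ (1 - x),
      ← mul_sum, sum_congr rfl fun A hA => congrArg _ (hcard A hA), ih, card_insert_of_notMem ha]
    push_cast; ring

theorem sum_bernoulliWeight (x : ℝ) (t : Finset ℕ) :
    ∑ A ∈ t.powerset, bernoulliWeight x t A = 1 := by
  simpa using sum_bernoulliWeight_mul_sq x 1 0 t

theorem sum_bernoulliWeight_mul_comp_inter {u t : Finset ℕ} (hut : u ⊆ t) (x : ℝ)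
    (g : Finset ℕ → ℝ) :
    ∑ A ∈ t.powerset, bernoulliWeight x t A * g (A ∩ u)
      = ∑ A ∈ u.powerset, bernoulliWeight x u A * g A := by
  obtain ⟨d, hd, rfl⟩ : ∃ d, Disjoint u d ∧ t = u ∪ d :=
    ⟨t \ u, disjoint_sdiff, (union_sdiff_of_subset hut).symm⟩
  clear hut
  induction d using Finset.induction_on with
  | empty =>
    simp only [union_empty]
    exact sum_congr rfl fun A hA => by rw [inter_eq_left.mpr (mem_powerset.mp hA)]
  | @insert a d ha ih =>
    have hau : a ∉ u := disjoint_right.mp hd (mem_insert_self a d)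
    rw [union_insert, sum_powerset_insert_bernoulliWeight_mul x (by simp [hau, ha]),
      ← ih (disjoint_insert_right.mp hd).2]
    refine sum_congr rfl fun A _ => ?_
    rw [insert_inter_of_notMem hau]
    ring

theorem sum_bernoulliWeight_mul_sq_card_inter {u t : Finset ℕ} (hut : u ⊆ t) (x d c : ℝ) :
    ∑ A ∈ t.powerset, bernoulliWeight x t A * (d + c * #(A ∩ u)) ^ 2
      = (d + c * (#u * x)) ^ 2 + c ^ 2 * (#u * x * (1 - x)) :=
  (sum_bernoulliWeight_mul_comp_inter hut x fun A => (d + c * #A) ^ 2).trans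
    (sum_bernoulliWeight_mul_sq x d c u)

theorem sum_sum_bernoulliWeight_mul_sq {u v t : Finset ℕ} (hu : u ⊆ t) (hv : v ⊆ t)
    (x y d c₁ c₂ : ℝ) :
    ∑ A ∈ t.powerset, ∑ B ∈ t.powerset,
      bernoulliWeight x t A * bernoulliWeight y t B * (d + c₁ * #(A ∩ u) + c₂ * #(B ∩ v)) ^ 2
      = (d + c₁ * (#u * x) + c₂ * (#v * y)) ^ 2
        + c₁ ^ 2 * (#u * x * (1 - x)) + c₂ ^ 2 * (#v * y * (1 - y)) := by
  have inner : ∀ A ∈ t.powerset, ∑ B ∈ t.powerset,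
      bernoulliWeight x t A * bernoulliWeight y t B * (d + c₁ * #(A ∩ u) + c₂ * #(B ∩ v)) ^ 2
      = bernoulliWeight x t A * ((d + c₂ * (#v * y)) + c₁ * #(A ∩ u)) ^ 2
        + c₂ ^ 2 * (#v * y * (1 - y)) * bernoulliWeight x t A := by
    intro A _
    simp_rw [mul_assoc, ← mul_sum, sum_bernoulliWeight_mul_sq_card_inter hv]
    ring
  rw [sum_congr rfl inner, sum_add_distrib, ← mul_sum, sum_bernoulliWeight,
    sum_bernoulliWeight_mul_sq_card_inter hu]
  ring

section FiniteRange

variable {Ω α : Type*} {Z : Ω → α} {T : Finset α}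

theorem comp_eq_sum_indicator_preimage (hT : ∀ ω, Z ω ∈ T) (f : α → ℝ) (ω : Ω) :
    f (Z ω) = ∑ z ∈ T, (Z ⁻¹' {z}).indicator (fun _ => f z) ω := by
  rw [sum_eq_single_of_mem (Z ω) (hT ω), Set.indicator_of_mem (s := Z ⁻¹' {Z ω}) rfl]
  exact fun z _ hz => Set.indicator_of_notMem (fun h => hz h.symm) _

variable [MeasurableSpace Ω] {μ : Measure Ω}

theorem integrable_comp_of_forall_mem [IsFiniteMeasure μ] (hT : ∀ ω, Z ω ∈ T)
    (hZ : ∀ z ∈ T, MeasurableSet (Z ⁻¹' {z})) (f : α → ℝ) :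
    Integrable (fun ω => f (Z ω)) μ := by
  simp_rw [comp_eq_sum_indicator_preimage hT f]
  exact integrable_finsetSum T fun z hz => (integrable_const _).indicator (hZ z hz)

theorem integral_comp_eq_sum_of_forall_mem [IsFiniteMeasure μ] (hT : ∀ ω, Z ω ∈ T)
    (hZ : ∀ z ∈ T, MeasurableSet (Z ⁻¹' {z})) (f : α → ℝ) :
    ∫ ω, f (Z ω) ∂μ = ∑ z ∈ T, μ.real (Z ⁻¹' {z}) * f z := by
  simp_rw [comp_eq_sum_indicator_preimage hT f]
  rw [integral_finsetSum T fun z hz => (integrable_const _).indicator (hZ z hz)]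
  exact sum_congr rfl fun z hz => by rw [integral_indicator_const _ (hZ z hz), smul_eq_mul]

end FiniteRange

theorem measureReal_inter_eq_mul_of_condExp_indicator {Ω : Type*} {m m₀ : MeasurableSpace Ω}
    {μ : Measure[m₀] Ω} [IsFiniteMeasure μ] (hm : m ≤ m₀) {C E : Set Ω}
    (hC : MeasurableSet[m₀] C) (hE : MeasurableSet[m] E) {g : Ω → ℝ}
    (hg : μ[C.indicator (fun _ => (1 : ℝ)) | m] =ᵐ[μ] g) {c : ℝ} (hgE : ∀ ω ∈ E, g ω = c) :
    μ.real (E ∩ C) = c * μ.real E := by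
  calc μ.real (E ∩ C) = ∫ ω in E, C.indicator (fun _ => (1 : ℝ)) ω ∂μ := by
        rw [setIntegral_indicator hC, setIntegral_const, smul_eq_mul, mul_one]
    _ = ∫ ω in E, g ω ∂μ := by
        rw [← setIntegral_condExp hm ((integrable_const _).indicator hC) hE]
        exact setIntegral_congr_ae (hm E hE) (hg.mono fun ω hω _ => hω)
    _ = c * μ.real E := by
        rw [setIntegral_congr_fun (hm E hE) hgE, setIntegral_const, smul_eq_mul, mul_comm]

section SecondMoment

variable {Ω : Type*} [MeasurableSpace Ω] {μ : Measure Ω}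

theorem integral_comp_of_forall_eq [IsProbabilityMeasure μ] {f : Ω → ℝ}
    (hf : ∀ ω ω', f ω = f ω') (g : ℝ → ℝ) : ∫ ω, g (f ω) ∂μ = g (∫ ω, f ω ∂μ) := by
  obtain ⟨ω₀⟩ := nonempty_of_isProbabilityMeasure μ
  simp_rw [hf _ ω₀, integral_const, probReal_univ, one_smul]

theorem sq_integral_le_integral_sq [IsProbabilityMeasure μ] {f : Ω → ℝ} (hf : MemLp f 2 μ) :
    (∫ ω, f ω ∂μ) ^ 2 ≤ ∫ ω, f ω ^ 2 ∂μ := by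
  have := variance_nonneg f μ
  rw [variance_eq_sub hf] at this
  simpa [sub_nonneg] using this

theorem measure_lt_abs_le_ofReal_integral_sq_div [IsFiniteMeasure μ] {f : Ω → ℝ}
    (hf : Integrable (fun ω => f ω ^ 2) μ) {ε : ℝ} (hε : 0 < ε) :
    μ {ω | ε < |f ω|} ≤ ENNReal.ofReal ((∫ ω, f ω ^ 2 ∂μ) / ε ^ 2) := by
  have hsub : {ω | ε < |f ω|} ⊆ {ω | ε ^ 2 ≤ f ω ^ 2} := fun ω hω => by
    rw [Set.mem_ofPred, ← sq_abs (f ω)]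
    exact pow_le_pow_left₀ hε.le (le_of_lt hω) 2
  have markov := mul_meas_ge_le_integral_of_nonneg
    (Eventually.of_forall fun ω => sq_nonneg (f ω)) hf (ε ^ 2)
  rw [ENNReal.le_ofReal_iff_toReal_le (measure_ne_top _ _) (by positivity),
    le_div_iff₀ (by positivity), mul_comm]
  exact (mul_le_mul_of_nonneg_left (ENNReal.toReal_mono (measure_ne_top _ _)
    (measure_mono hsub)) (by positivity)).trans markov

end SecondMoment

section MeanSquareConvergence

variable {ι : Type*} {l : Filter ι} {Ω : ι → Type*} {mΩ : ∀ i, MeasurableSpace (Ω i)}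
  {μ : ∀ i, Measure (Ω i)} {f : ∀ i, Ω i → ℝ} {c : ℝ}

theorem tendsto_integral_of_tendsto_integral_sq_sub [∀ i, IsProbabilityMeasure (μ i)]
    (hf : ∀ i, MemLp (f i) 2 (μ i))
    (h : Tendsto (fun i => ∫ ω, (f i ω - c) ^ 2 ∂μ i) l (nhds 0)) :
    Tendsto (fun i => ∫ ω, f i ω ∂μ i) l (nhds c) := by
  have hbound : ∀ i, ‖(∫ ω, f i ω ∂μ i) - c‖ ≤ √(∫ ω, (f i ω - c) ^ 2 ∂μ i) := fun i => by
    have hfc : MemLp (fun ω => f i ω - c) 2 (μ i) := (hf i).sub (memLp_const c)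
    have := sq_integral_le_integral_sq hfc
    rw [integral_sub ((hf i).integrable one_le_two) (integrable_const c)] at this
    simpa using Real.abs_le_sqrt this
  exact tendsto_sub_nhds_zero_iff.mp (squeeze_zero_norm hbound (by simpa using h.sqrt))

theorem tendsto_measure_lt_abs_sub_of_tendsto_integral_sq_sub [∀ i, IsFiniteMeasure (μ i)]
    (hf : ∀ i, MemLp (f i) 2 (μ i))
    (h : Tendsto (fun i => ∫ ω, (f i ω - c) ^ 2 ∂μ i) l (nhds 0)) {ε : ℝ} (hε : 0 < ε) :
    Tendsto (fun i => μ i {ω | ε < |f i ω - c|}) l (nhds 0) := by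
  have hbound : Tendsto (fun i => ENNReal.ofReal ((∫ ω, (f i ω - c) ^ 2 ∂μ i) / ε ^ 2)) l
      (nhds 0) := by
    simpa using ENNReal.tendsto_ofReal (h.div_const (ε ^ 2))
  exact tendsto_of_tendsto_of_tendsto_of_le_of_le tendsto_const_nhds hbound (fun _ => zero_le)
    fun i => measure_lt_abs_le_ofReal_integral_sq_div ((hf i).sub (memLp_const c)).integrable_sq hε

theorem tendsto_integral_sq_sub_of_forall_eq [∀ i, IsProbabilityMeasure (μ i)]
    (hf : ∀ i ω ω', f i ω = f i ω') (h : Tendsto (fun i => ∫ ω, f i ω ∂μ i) l (nhds c)) :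
    Tendsto (fun i => ∫ ω, (f i ω - c) ^ 2 ∂μ i) l (nhds 0) := by
  simp_rw [integral_comp_of_forall_eq (hf _) fun t => (t - c) ^ 2]
  simpa using (h.sub_const c).pow 2

end MeanSquareConvergence

theorem sum_range_eq_card_filter_eq_one_inter {f : ℕ → ℕ} (hf : ∀ j, f j ≤ 1) {s N : ℕ}
    (hs : s ≤ N) : ∑ j ∈ range s, f j = #({j ∈ range N | f j = 1} ∩ range s) := by
  have hf' : ∀ j, f j = if f j = 1 then 1 else 0 := fun j => by
    rcases Nat.le_one_iff_eq_zero_or_eq_one.mp (hf j) with h | h <;> simp [h]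
  rw [sum_congr rfl fun j _ => hf' j, sum_boole, Nat.cast_id, filter_inter,
    inter_eq_right.mpr (range_subset_range.mpr hs)]

theorem filter_eq_one_eq_iff {f : ℕ → ℕ} (hf : ∀ j, f j ≤ 1) {N : ℕ} {A : Finset ℕ}
    (hA : A ⊆ range N) :
    {j ∈ range N | f j = 1} = A ↔ ∀ j < N, f j = if j ∈ A then 1 else 0 := by
  rw [Finset.ext_iff]
  refine ⟨fun h j hj => ?_, fun h j => ?_⟩
  · have := h j
    rcases Nat.le_one_iff_eq_zero_or_eq_one.mp (hf j) with h0 | h1 <;> simp_all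
  · by_cases hj : j < N
    · by_cases hjA : j ∈ A <;> simp [h j hj, hj, hjA]
    · simpa [hj] using fun h => hj (mem_range.mp (hA h))

noncomputable def infectionProb (lam h : ℝ) (i : ℕ) : ℝ := 1 - exp (-(lam * i * h))

noncomputable def recoveryProb (gam h : ℝ) : ℝ := 1 - exp (-(gam * h))

theorem one_sub_exp_neg_mem_Icc {t : ℝ} (ht : 0 ≤ t) : 1 - exp (-t) ∈ Set.Icc (0 : ℝ) 1 :=
  ⟨sub_nonneg.mpr (exp_le_one_iff.mpr (neg_nonpos.mpr ht)), sub_le_self _ (exp_pos _).le⟩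

theorem infectionProb_mem_Icc {lam h : ℝ} (hlam : 0 ≤ lam) (hh : 0 ≤ h) (i : ℕ) :
    infectionProb lam h i ∈ Set.Icc (0 : ℝ) 1 :=
  one_sub_exp_neg_mem_Icc (by positivity)

theorem recoveryProb_mem_Icc {gam h : ℝ} (hgam : 0 ≤ gam) (hh : 0 ≤ h) :
    recoveryProb gam h ∈ Set.Icc (0 : ℝ) 1 :=
  one_sub_exp_neg_mem_Icc (mul_nonneg hgam hh)

theorem prod_ite_eq_one_eq_bernoulliWeight (e : ℝ) (t A : Finset ℕ) :
    ∏ j ∈ t, (if (if j ∈ A then 1 else 0) = 1 then 1 - e else e) = bernoulliWeight (1 - e) t A :=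
  prod_congr rfl fun j _ => by by_cases hj : j ∈ A <;> simp [hj]

theorem sirFiltration_le {Ω : Type*} [m₀ : MeasurableSpace Ω] {S I : ℕ → Ω → ℕ}
    (hS : ∀ k, Measurable (S k)) (hI : ∀ k, Measurable (I k)) (k : ℕ) :
    sirFiltration S I k ≤ m₀ :=
  iSup₂_le fun j _ => ((hS j).prodMk (hI j)).comap_le

theorem measurableSet_sirFiltration_preimage {Ω : Type*} {S I : ℕ → Ω → ℕ} (k : ℕ)
    (z : ℕ × ℕ) :
    MeasurableSet[sirFiltration S I k] ((fun ω => (S k ω, I k ω)) ⁻¹' {z}) :=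
  le_iSup₂ (f := fun j (_ : j ∈ range (k + 1)) =>
      MeasurableSpace.comap (fun ω => (S j ω, I j ω)) inferInstance) k
    (self_mem_range_succ k) _ ⟨{z}, measurableSet_singleton z, rfl⟩

def stepConfig {Ω : Type*} (N : ℕ) (X Y : ℕ → ℕ → Ω → ℕ) (k : ℕ) (ω : Ω) :
    Finset ℕ × Finset ℕ :=
  ({j ∈ range N | X k j ω = 1}, {j ∈ range N | Y k j ω = 1})

theorem stepConfig_mem {Ω : Type*} {N : ℕ} {X Y : ℕ → ℕ → Ω → ℕ} (k : ℕ) (ω : Ω) :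
    stepConfig N X Y k ω ∈ (range N).powerset ×ˢ (range N).powerset :=
  mem_product.mpr ⟨mem_powerset.mpr (filter_subset _ _), mem_powerset.mpr (filter_subset _ _)⟩

theorem preimage_state_stepConfig {Ω : Type*} {N : ℕ} {S I : ℕ → Ω → ℕ}
    {X Y : ℕ → ℕ → Ω → ℕ} (k : ℕ) (z : ℕ × ℕ) (c : Finset ℕ × Finset ℕ) :
    (fun ω => ((S k ω, I k ω), stepConfig N X Y k ω)) ⁻¹' {(z, c)}
      = (fun ω => (S k ω, I k ω)) ⁻¹' {z} ∩ stepConfig N X Y k ⁻¹' {c} := by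
  rw [← Set.singleton_prod_singleton, Set.mk_preimage_prod]

namespace IsSIRModel

variable {Ω : Type*} [MeasurableSpace Ω] {μ : Measure Ω} {N : ℕ} {h lam gam : ℝ}
  {S I R : ℕ → Ω → ℕ} {X Y : ℕ → ℕ → Ω → ℕ}

theorem isProbabilityMeasure (hm : IsSIRModel μ N h lam gam S I R X Y) :
    IsProbabilityMeasure μ :=
  hm.1

theorem h_pos (hm : IsSIRModel μ N h lam gam S I R X Y) : 0 < h := hm.2.1

theorem lam_nonneg (hm : IsSIRModel μ N h lam gam S I R X Y) : 0 ≤ lam := hm.2.2.1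

theorem gam_pos (hm : IsSIRModel μ N h lam gam S I R X Y) : 0 < gam := hm.2.2.2.1

theorem X_le_one (hm : IsSIRModel μ N h lam gam S I R X Y) (k j : ℕ) (ω : Ω) : X k j ω ≤ 1 :=
  hm.2.2.2.2.2.1 k j ω

theorem Y_le_one (hm : IsSIRModel μ N h lam gam S I R X Y) (k j : ℕ) (ω : Ω) : Y k j ω ≤ 1 :=
  hm.2.2.2.2.2.2.1 k j ω

theorem measurable_S (hm : IsSIRModel μ N h lam gam S I R X Y) (k : ℕ) : Measurable (S k) :=
  hm.2.2.2.2.2.2.2.1 k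

theorem measurable_I (hm : IsSIRModel μ N h lam gam S I R X Y) (k : ℕ) : Measurable (I k) :=
  hm.2.2.2.2.2.2.2.2.1 k

theorem measurable_X (hm : IsSIRModel μ N h lam gam S I R X Y) (k j : ℕ) :
    Measurable (X k j) :=
  hm.2.2.2.2.2.2.2.2.2.2.1 k j

theorem measurable_Y (hm : IsSIRModel μ N h lam gam S I R X Y) (k j : ℕ) :
    Measurable (Y k j) :=
  hm.2.2.2.2.2.2.2.2.2.2.2.1 k j

theorem S_zero_eq (hm : IsSIRModel μ N h lam gam S I R X Y) (ω ω' : Ω) : S 0 ω = S 0 ω' :=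
  (hm.2.2.2.2.2.2.2.2.2.2.2.2.1 ω ω').1

theorem I_zero_eq (hm : IsSIRModel μ N h lam gam S I R X Y) (ω ω' : Ω) : I 0 ω = I 0 ω' :=
  (hm.2.2.2.2.2.2.2.2.2.2.2.2.1 ω ω').2.1

theorem S_le (hm : IsSIRModel μ N h lam gam S I R X Y) (k : ℕ) (ω : Ω) : S k ω ≤ N := by
  have := hm.2.2.2.2.1 k ω; omega

theorem I_le (hm : IsSIRModel μ N h lam gam S I R X Y) (k : ℕ) (ω : Ω) : I k ω ≤ N := by
  have := hm.2.2.2.2.1 k ω; omega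

theorem measurable_state (hm : IsSIRModel μ N h lam gam S I R X Y) (k : ℕ) :
    Measurable fun ω => (S k ω, I k ω) :=
  (hm.measurable_S k).prodMk (hm.measurable_I k)

theorem preimage_stepConfig (hm : IsSIRModel μ N h lam gam S I R X Y) (k : ℕ)
    {A B : Finset ℕ} (hA : A ⊆ range N) (hB : B ⊆ range N) :
    stepConfig N X Y k ⁻¹' {(A, B)} = {ω | ∀ j < N,
      X k j ω = (if j ∈ A then 1 else 0) ∧ Y k j ω = (if j ∈ B then 1 else 0)} := by
  ext ω
  simp only [Set.mem_preimage, Set.mem_singleton_iff, stepConfig, Prod.ext_iff,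
    filter_eq_one_eq_iff (hm.X_le_one k · ω) hA, filter_eq_one_eq_iff (hm.Y_le_one k · ω) hB,
    ← forall_and, Set.mem_ofPred]

theorem measurableSet_preimage_stepConfig (hm : IsSIRModel μ N h lam gam S I R X Y) (k : ℕ)
    {A B : Finset ℕ} (hA : A ⊆ range N) (hB : B ⊆ range N) :
    MeasurableSet (stepConfig N X Y k ⁻¹' {(A, B)}) := by
  rw [preimage_stepConfig hm k hA hB]
  simp only [Set.ofPred_forall, Set.ofPred_and]
  exact .iInter fun j => .iInter fun _ =>
    (measurableSet_singleton _).preimage (hm.measurable_X k j) |>.inter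
      ((measurableSet_singleton _).preimage (hm.measurable_Y k j))

theorem measurableSet_preimage_state_stepConfig (hm : IsSIRModel μ N h lam gam S I R X Y)
    (k : ℕ) (z : ℕ × ℕ) {A B : Finset ℕ} (hA : A ⊆ range N) (hB : B ⊆ range N) :
    MeasurableSet ((fun ω => ((S k ω, I k ω), stepConfig N X Y k ω)) ⁻¹' {(z, (A, B))}) := by
  rw [preimage_state_stepConfig]
  exact (hm.measurable_state k (measurableSet_singleton z)).inter
    (measurableSet_preimage_stepConfig hm k hA hB)

theorem measureReal_preimage_state_stepConfig (hm : IsSIRModel μ N h lam gam S I R X Y)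
    (k : ℕ) (z : ℕ × ℕ) {A B : Finset ℕ} (hA : A ⊆ range N) (hB : B ⊆ range N) :
    μ.real ((fun ω => ((S k ω, I k ω), stepConfig N X Y k ω)) ⁻¹' {(z, (A, B))})
      = bernoulliWeight (infectionProb lam h z.2) (range N) A
          * bernoulliWeight (recoveryProb gam h) (range N) B
          * μ.real ((fun ω => (S k ω, I k ω)) ⁻¹' {z}) := by
  have := hm.isProbabilityMeasure
  have hcond := hm.2.2.2.2.2.2.2.2.2.2.2.2.2.2.2.2 k (fun j => if j ∈ A then 1 else 0)
    (fun j => if j ∈ B then 1 else 0) (fun j => by split_ifs <;> simp)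
    (fun j => by split_ifs <;> simp)
  rw [← preimage_stepConfig hm k hA hB] at hcond
  rw [preimage_state_stepConfig]
  refine measureReal_inter_eq_mul_of_condExp_indicator
    (sirFiltration_le hm.measurable_S hm.measurable_I k)
    (measurableSet_preimage_stepConfig hm k hA hB) (measurableSet_sirFiltration_preimage k z)
    hcond fun ω hω => ?_
  rw [Set.mem_preimage, Set.mem_singleton_iff] at hω
  rw [prod_ite_eq_one_eq_bernoulliWeight, prod_ite_eq_one_eq_bernoulliWeight, ← hω]
  rfl

theorem sum_range_X_eq_card (hm : IsSIRModel μ N h lam gam S I R X Y) (k : ℕ) (ω : Ω) :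
    ∑ j ∈ range (S k ω), X k j ω = #((stepConfig N X Y k ω).1 ∩ range (S k ω)) :=
  sum_range_eq_card_filter_eq_one_inter (hm.X_le_one k · ω) (hm.S_le k ω)

theorem sum_range_Y_eq_card (hm : IsSIRModel μ N h lam gam S I R X Y) (k : ℕ) (ω : Ω) :
    ∑ j ∈ range (I k ω), Y k j ω = #((stepConfig N X Y k ω).2 ∩ range (I k ω)) :=
  sum_range_eq_card_filter_eq_one_inter (hm.Y_le_one k · ω) (hm.I_le k ω)

theorem integrable_comp (hm : IsSIRModel μ N h lam gam S I R X Y) (k : ℕ) (g : ℕ → ℕ → ℝ) :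
    Integrable (fun ω => g (S k ω) (I k ω)) μ :=
  have := hm.isProbabilityMeasure
  integrable_comp_of_forall_mem (T := range (N + 1) ×ˢ range (N + 1)) (f := fun z => g z.1 z.2)
    (fun ω => by simp [hm.S_le k ω, hm.I_le k ω])
    (fun z _ => hm.measurable_state k (measurableSet_singleton z))

theorem memLp_comp (hm : IsSIRModel μ N h lam gam S I R X Y) (k : ℕ) (g : ℕ → ℕ → ℝ) :
    MemLp (fun ω => g (S k ω) (I k ω)) 2 μ :=
  (memLp_two_iff_integrable_sq ((measurable_of_countable fun z : ℕ × ℕ => g z.1 z.2).comp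
    (hm.measurable_state k)).aestronglyMeasurable).mpr (hm.integrable_comp k fun s i => g s i ^ 2)

theorem integral_step (hm : IsSIRModel μ N h lam gam S I R X Y) (k : ℕ)
    (Φ : ℕ → ℕ → ℕ → ℕ → ℝ) :
    ∫ ω, Φ (S k ω) (I k ω) (∑ j ∈ range (S k ω), X k j ω) (∑ j ∈ range (I k ω), Y k j ω) ∂μ
      = ∫ ω, ∑ A ∈ (range N).powerset, ∑ B ∈ (range N).powerset,
          bernoulliWeight (infectionProb lam h (I k ω)) (range N) A
            * bernoulliWeight (recoveryProb gam h) (range N) B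
            * Φ (S k ω) (I k ω) #(A ∩ range (S k ω)) #(B ∩ range (I k ω)) ∂μ := by
  have := hm.isProbabilityMeasure
  set states := range (N + 1) ×ˢ range (N + 1)
  have hstate : ∀ ω, (S k ω, I k ω) ∈ states := fun ω => by
    simp [states, hm.S_le k ω, hm.I_le k ω]
  simp_rw [hm.sum_range_X_eq_card, hm.sum_range_Y_eq_card]
  refine (integral_comp_eq_sum_of_forall_mem
      (T := states ×ˢ ((range N).powerset ×ˢ (range N).powerset))
      (Z := fun ω => ((S k ω, I k ω), stepConfig N X Y k ω))
      (f := fun z => Φ z.1.1 z.1.2 #(z.2.1 ∩ range z.1.1) #(z.2.2 ∩ range z.1.2))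
      (fun ω => mem_product.mpr ⟨hstate ω, stepConfig_mem k ω⟩)
      fun ⟨z, A, B⟩ hz => ?_).trans
    (Eq.trans ?_ (integral_comp_eq_sum_of_forall_mem (T := states)
      (Z := fun ω => (S k ω, I k ω))
      (f := fun z => ∑ A ∈ (range N).powerset, ∑ B ∈ (range N).powerset,
        bernoulliWeight (infectionProb lam h z.2) (range N) A
          * bernoulliWeight (recoveryProb gam h) (range N) B
          * Φ z.1 z.2 #(A ∩ range z.1) #(B ∩ range z.2))
      hstate fun z _ => hm.measurable_state k (measurableSet_singleton z)).symm)
  · simp only [mem_product, mem_powerset] at hz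
    exact hm.measurableSet_preimage_state_stepConfig k z hz.2.1 hz.2.2
  rw [sum_product]
  refine sum_congr rfl fun z _ => ?_
  simp_rw [sum_product, mul_sum]
  refine sum_congr rfl fun A hA => sum_congr rfl fun B hB => ?_
  rw [hm.measureReal_preimage_state_stepConfig k z (mem_powerset.mp hA) (mem_powerset.mp hB)]
  ring

theorem integral_affine_sq_step (hm : IsSIRModel μ N h lam gam S I R X Y) (k : ℕ)
    (d : ℕ → ℕ → ℝ) (c₁ c₂ : ℝ) :
    ∫ ω, (d (S k ω) (I k ω) + c₁ * (∑ j ∈ range (S k ω), X k j ω : ℕ)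
        + c₂ * (∑ j ∈ range (I k ω), Y k j ω : ℕ)) ^ 2 ∂μ
      = ∫ ω, ((d (S k ω) (I k ω) + c₁ * (S k ω * infectionProb lam h (I k ω))
            + c₂ * (I k ω * recoveryProb gam h)) ^ 2
          + c₁ ^ 2 * (S k ω * infectionProb lam h (I k ω) * (1 - infectionProb lam h (I k ω)))
          + c₂ ^ 2 * (I k ω * recoveryProb gam h * (1 - recoveryProb gam h))) ∂μ := by
  refine (hm.integral_step k fun s i u v => (d s i + c₁ * u + c₂ * v) ^ 2).trans
    (integral_congr_ae (Eventually.of_forall fun ω => ?_))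
  simpa using sum_sum_bernoulliWeight_mul_sq (range_subset_range.mpr (hm.S_le k ω))
    (range_subset_range.mpr (hm.I_le k ω)) (infectionProb lam h (I k ω)) (recoveryProb gam h)
    (d (S k ω) (I k ω)) c₁ c₂

theorem cast_S_succ (hm : IsSIRModel μ N h lam gam S I R X Y) (k : ℕ) (ω : Ω) :
    (S (k + 1) ω : ℝ) = S k ω - (∑ j ∈ range (S k ω), X k j ω : ℕ) := by
  rw [eq_sub_iff_add_eq]; exact_mod_cast hm.2.2.2.2.2.2.2.2.2.2.2.2.2.1 k ω

theorem cast_I_succ (hm : IsSIRModel μ N h lam gam S I R X Y) (k : ℕ) (ω : Ω) :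
    (I (k + 1) ω : ℝ)
      = I k ω + (∑ j ∈ range (S k ω), X k j ω : ℕ) - (∑ j ∈ range (I k ω), Y k j ω : ℕ) := by
  rw [eq_sub_iff_add_eq]; exact_mod_cast hm.2.2.2.2.2.2.2.2.2.2.2.2.2.2.1 k ω

end IsSIRModel

noncomputable def sirStep (b g : ℝ) (x : ℝ × ℝ) : ℝ × ℝ :=
  (x.1 * exp (-(b * x.2)), x.2 * exp (-g) + x.1 * (1 - exp (-(b * x.2))))

theorem sirStep_nonneg {b g : ℝ} (hb : 0 ≤ b) {x : ℝ × ℝ} (hx : 0 ≤ x) : 0 ≤ sirStep b g x := by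
  obtain ⟨hx₁, hx₂⟩ := hx
  have := (one_sub_exp_neg_mem_Icc (mul_nonneg hb hx₂)).1
  exact ⟨mul_nonneg hx₁ (exp_pos _).le,
    add_nonneg (mul_nonneg hx₂ (exp_pos _).le) (mul_nonneg hx₁ this)⟩

theorem sirStep_iterate_nonneg {b g : ℝ} (hb : 0 ≤ b) {x : ℝ × ℝ} (hx : 0 ≤ x) (n : ℕ) :
    0 ≤ (sirStep b g)^[n] x := by
  induction n with
  | zero => exact hx
  | succ n ih => rw [Function.iterate_succ_apply']; exact sirStep_nonneg hb ih

theorem exp_neg_sub_exp_neg_le {a b : ℝ} (ha : 0 ≤ a) (hab : a ≤ b) :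
    exp (-a) - exp (-b) ≤ b - a := by
  have hsplit : exp (-b) = exp (-a) * exp (a - b) := by rw [← exp_add]; ring_nf
  have htangent := add_one_le_exp (a - b)
  have hle : exp (-a) ≤ 1 := exp_le_one_iff.mpr (neg_nonpos.mpr ha)
  nlinarith [mul_nonneg (exp_pos (-a)).le (sub_nonneg.mpr htangent),
    mul_nonneg (sub_nonneg.mpr hle) (sub_nonneg.mpr hab)]

theorem abs_exp_neg_sub_exp_neg_le {a b : ℝ} (ha : 0 ≤ a) (hb : 0 ≤ b) :
    |exp (-a) - exp (-b)| ≤ |a - b| := by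
  wlog hab : a ≤ b generalizing a b
  · rw [abs_sub_comm, abs_sub_comm a]
    exact this hb ha (le_of_not_ge hab)
  rw [abs_of_nonneg (sub_nonneg.mpr (exp_le_exp.mpr (neg_le_neg hab))), abs_sub_comm,
    abs_of_nonneg (sub_nonneg.mpr hab)]
  exact exp_neg_sub_exp_neg_le ha hab

theorem sq_add_le_of_abs_le {m v K a b c ε : ℝ} (hm : |m| ≤ K * (|a| + |b| + |c|))
    (hv : v ≤ ε) : m ^ 2 + v ≤ 3 * K ^ 2 * (a ^ 2 + b ^ 2 + c ^ 2) + ε := by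
  have hsq : m ^ 2 ≤ (K * (|a| + |b| + |c|)) ^ 2 := by
    rw [← sq_abs m]; exact pow_le_pow_left₀ (abs_nonneg m) hm 2
  have hthree : (|a| + |b| + |c|) ^ 2 ≤ 3 * (a ^ 2 + b ^ 2 + c ^ 2) := by
    rw [← sq_abs a, ← sq_abs b, ← sq_abs c]
    nlinarith [sq_nonneg (|a| - |b|), sq_nonneg (|a| - |c|), sq_nonneg (|b| - |c|)]
  nlinarith [mul_le_mul_of_nonneg_left hthree (sq_nonneg K)]

theorem natCast_mul_mul_one_sub_div_sq_mem_Icc {s N : ℕ} (hs : s ≤ N) {p : ℝ}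
    (hp : p ∈ Set.Icc (0 : ℝ) 1) : s * p * (1 - p) / N ^ 2 ∈ Set.Icc (0 : ℝ) (1 / (4 * N)) := by
  refine ⟨div_nonneg (mul_nonneg (mul_nonneg s.cast_nonneg hp.1) (sub_nonneg.mpr hp.2))
    (sq_nonneg _), ?_⟩
  rcases N.eq_zero_or_pos with rfl | hN
  · simp
  have hNr : (0 : ℝ) < N := Nat.cast_pos.mpr hN
  have hsN : (s : ℝ) ≤ N := Nat.cast_le.mpr hs
  rw [div_le_div_iff₀ (by positivity) (by positivity)]
  nlinarith [mul_nonneg (Nat.cast_nonneg s) (sq_nonneg (1 - 2 * p)),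
    mul_nonneg hNr.le (sub_nonneg.mpr hsN)]

section Drift

variable {h β lam gam : ℝ} {N s i : ℕ} {x : ℝ × ℝ}

theorem abs_exp_infection_sub_le (hh : 0 ≤ h) (hβ : 0 ≤ β) (hlam : 0 ≤ lam) (hN : 0 < N)
    (hi : i ≤ N) (hx : 0 ≤ x.2) :
    |exp (-(lam * i * h)) - exp (-(β * h * x.2))|
      ≤ h * |N * lam - β| + h * β * |(i : ℝ) / N - x.2| := by
  have hNr : (0 : ℝ) < N := Nat.cast_pos.mpr hN
  have hiN : (i : ℝ) / N ∈ Set.Icc (0 : ℝ) 1 :=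
    ⟨by positivity, div_le_one_of_le₀ (Nat.cast_le.mpr hi) hNr.le⟩
  calc |exp (-(lam * i * h)) - exp (-(β * h * x.2))|
      ≤ |lam * i * h - β * h * x.2| := abs_exp_neg_sub_exp_neg_le (by positivity) (by positivity)
    _ = h * |(N * lam - β) * (i / N) + β * (i / N - x.2)| := by
        rw [← abs_of_nonneg hh, ← abs_mul, abs_of_nonneg hh]
        congr 1
        field_simp
        ring
    _ ≤ h * (|N * lam - β| * 1 + β * |(i : ℝ) / N - x.2|) := by
        gcongr
        refine (abs_add_le _ _).trans ?_
        rw [abs_mul, abs_mul, abs_of_nonneg hiN.1, abs_of_nonneg hβ]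
        gcongr
        exact hiN.2
    _ = h * |N * lam - β| + h * β * |(i : ℝ) / N - x.2| := by ring

theorem abs_sub_sirStep_fst_le (hh : 0 ≤ h) (hβ : 0 ≤ β) (hlam : 0 ≤ lam) (hN : 0 < N)
    (hi : i ≤ N) (hx : 0 ≤ x) :
    |s * (1 - infectionProb lam h i) / N - (sirStep (β * h) (gam * h) x).1|
      ≤ (1 + x.1 * h * (1 + β)) * (|(s : ℝ) / N - x.1| + |(i : ℝ) / N - x.2| + |N * lam - β|) := by
  have hx₁ : 0 ≤ x.1 := hx.1
  have hexp := abs_exp_infection_sub_le hh hβ hlam hN hi hx.2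
  have hE := exp_pos (-(lam * i * h))
  have hE1 : exp (-(lam * i * h)) ≤ 1 := by
    have := (one_sub_exp_neg_mem_Icc (by positivity : 0 ≤ lam * i * h)).1; linarith
  calc |s * (1 - infectionProb lam h i) / N - (sirStep (β * h) (gam * h) x).1|
      = |(s / N - x.1) * exp (-(lam * i * h))
          + x.1 * (exp (-(lam * i * h)) - exp (-(β * h * x.2)))| := by
        rw [infectionProb, sirStep, sub_sub_cancel]; ring_nf
    _ ≤ |(s : ℝ) / N - x.1| * 1 + x.1 * (h * |N * lam - β| + h * β * |(i : ℝ) / N - x.2|) := by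
        refine (abs_add_le _ _).trans ?_
        rw [abs_mul, abs_mul, abs_of_pos hE, abs_of_nonneg hx₁]
        gcongr
    _ ≤ _ := by
        nlinarith [abs_nonneg ((s : ℝ) / N - x.1), abs_nonneg ((i : ℝ) / N - x.2),
          abs_nonneg ((N : ℝ) * lam - β), mul_nonneg hx₁ hh, mul_nonneg (mul_nonneg hx₁ hh) hβ]

theorem abs_sub_sirStep_snd_le (hh : 0 ≤ h) (hβ : 0 ≤ β) (hlam : 0 ≤ lam) (hgam : 0 ≤ gam)
    (hN : 0 < N) (hi : i ≤ N) (hx : 0 ≤ x) :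
    |i * (1 - recoveryProb gam h) / N + s * infectionProb lam h i / N
        - (sirStep (β * h) (gam * h) x).2|
      ≤ (1 + x.1 * h * (1 + β)) * (|(s : ℝ) / N - x.1| + |(i : ℝ) / N - x.2| + |N * lam - β|) := by
  have hx₁ : 0 ≤ x.1 := hx.1
  have hexp := abs_exp_infection_sub_le hh hβ hlam hN hi hx.2
  have hp := one_sub_exp_neg_mem_Icc (by positivity : 0 ≤ lam * i * h)
  have hq := one_sub_exp_neg_mem_Icc (by positivity : 0 ≤ gam * h)
  calc |i * (1 - recoveryProb gam h) / N + s * infectionProb lam h i / N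
        - (sirStep (β * h) (gam * h) x).2|
      = |(i / N - x.2) * (1 - (1 - exp (-(gam * h)))) + (s / N - x.1) * (1 - exp (-(lam * i * h)))
          + x.1 * (exp (-(β * h * x.2)) - exp (-(lam * i * h)))| := by
        rw [infectionProb, recoveryProb, sirStep]; ring_nf
    _ ≤ |(i : ℝ) / N - x.2| * 1 + |(s : ℝ) / N - x.1| * 1
          + x.1 * (h * |N * lam - β| + h * β * |(i : ℝ) / N - x.2|) := by
        refine (abs_add_le _ _).trans (add_le_add ((abs_add_le _ _).trans ?_) ?_)
        · rw [abs_mul, abs_mul, abs_of_nonneg (sub_nonneg.mpr hq.2), abs_of_nonneg hp.1]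
          gcongr
          exacts [sub_le_self _ hq.1, hp.2]
        · rw [abs_mul, abs_of_nonneg hx₁, abs_sub_comm]
          gcongr
    _ ≤ _ := by
        nlinarith [abs_nonneg ((s : ℝ) / N - x.1), abs_nonneg ((i : ℝ) / N - x.2),
          abs_nonneg ((N : ℝ) * lam - β), mul_nonneg hx₁ hh, mul_nonneg (mul_nonneg hx₁ hh) hβ]

theorem sq_sub_sirStep_fst_add_le (hh : 0 ≤ h) (hβ : 0 ≤ β) (hlam : 0 ≤ lam) (hN : 0 < N)
    (hs : s ≤ N) (hi : i ≤ N) (hx : 0 ≤ x) :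
    (s * (1 - infectionProb lam h i) / N - (sirStep (β * h) (gam * h) x).1) ^ 2
        + s * infectionProb lam h i * (1 - infectionProb lam h i) / N ^ 2
      ≤ 3 * (1 + x.1 * h * (1 + β)) ^ 2
          * (((s : ℝ) / N - x.1) ^ 2 + ((i : ℝ) / N - x.2) ^ 2 + (N * lam - β) ^ 2)
        + 1 / (2 * N) := by
  have hNr : (0 : ℝ) < N := Nat.cast_pos.mpr hN
  refine sq_add_le_of_abs_le (abs_sub_sirStep_fst_le hh hβ hlam hN hi hx)
    ((natCast_mul_mul_one_sub_div_sq_mem_Icc hs (infectionProb_mem_Icc hlam hh i)).2.trans ?_)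
  exact one_div_le_one_div_of_le (by positivity) (by linarith)

theorem sq_sub_sirStep_snd_add_le (hh : 0 ≤ h) (hβ : 0 ≤ β) (hlam : 0 ≤ lam) (hgam : 0 ≤ gam)
    (hN : 0 < N) (hs : s ≤ N) (hi : i ≤ N) (hx : 0 ≤ x) :
    (i * (1 - recoveryProb gam h) / N + s * infectionProb lam h i / N
          - (sirStep (β * h) (gam * h) x).2) ^ 2
        + (s * infectionProb lam h i * (1 - infectionProb lam h i) / N ^ 2
          + i * recoveryProb gam h * (1 - recoveryProb gam h) / N ^ 2)
      ≤ 3 * (1 + x.1 * h * (1 + β)) ^ 2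
          * (((s : ℝ) / N - x.1) ^ 2 + ((i : ℝ) / N - x.2) ^ 2 + (N * lam - β) ^ 2)
        + 1 / (2 * N) := by
  refine sq_add_le_of_abs_le (abs_sub_sirStep_snd_le hh hβ hlam hgam hN hi hx)
    ((add_le_add
      (natCast_mul_mul_one_sub_div_sq_mem_Icc hs (infectionProb_mem_Icc hlam hh i)).2
      (natCast_mul_mul_one_sub_div_sq_mem_Icc hi (recoveryProb_mem_Icc hgam hh)).2).trans_eq ?_)
  field_simp
  norm_num

end Drift

namespace IsSIRModel

variable {Ω : Type*} [MeasurableSpace Ω] {μ : Measure Ω} {N : ℕ} {h lam gam : ℝ}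
  {S I R : ℕ → Ω → ℕ} {X Y : ℕ → ℕ → Ω → ℕ}

theorem integral_sq_S_succ_sub (hm : IsSIRModel μ N h lam gam S I R X Y) (k : ℕ) (c : ℝ) :
    ∫ ω, ((S (k + 1) ω : ℝ) / N - c) ^ 2 ∂μ
      = ∫ ω, ((S k ω * (1 - infectionProb lam h (I k ω)) / N - c) ^ 2
          + S k ω * infectionProb lam h (I k ω) * (1 - infectionProb lam h (I k ω)) / N ^ 2) ∂μ :=
  calc ∫ ω, ((S (k + 1) ω : ℝ) / N - c) ^ 2 ∂μ
      = ∫ ω, (((S k ω : ℝ) / N - c) + (-1 / N) * (∑ j ∈ range (S k ω), X k j ω : ℕ)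
          + 0 * (∑ j ∈ range (I k ω), Y k j ω : ℕ)) ^ 2 ∂μ :=
        integral_congr_ae (Eventually.of_forall fun ω => by simp only [hm.cast_S_succ]; ring)
    _ = _ := hm.integral_affine_sq_step k (fun s _ => (s : ℝ) / N - c) (-1 / N) 0
    _ = _ := integral_congr_ae (Eventually.of_forall fun ω => by dsimp only; ring)

theorem integral_sq_I_succ_sub (hm : IsSIRModel μ N h lam gam S I R X Y) (k : ℕ) (c : ℝ) :
    ∫ ω, ((I (k + 1) ω : ℝ) / N - c) ^ 2 ∂μ
      = ∫ ω, ((I k ω * (1 - recoveryProb gam h) / N + S k ω * infectionProb lam h (I k ω) / N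
            - c) ^ 2
          + (S k ω * infectionProb lam h (I k ω) * (1 - infectionProb lam h (I k ω)) / N ^ 2
            + I k ω * recoveryProb gam h * (1 - recoveryProb gam h) / N ^ 2)) ∂μ :=
  calc ∫ ω, ((I (k + 1) ω : ℝ) / N - c) ^ 2 ∂μ
      = ∫ ω, (((I k ω : ℝ) / N - c) + (1 / N) * (∑ j ∈ range (S k ω), X k j ω : ℕ)
          + (-1 / N) * (∑ j ∈ range (I k ω), Y k j ω : ℕ)) ^ 2 ∂μ :=
        integral_congr_ae (Eventually.of_forall fun ω => by simp only [hm.cast_I_succ]; ring)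
    _ = _ := hm.integral_affine_sq_step k (fun _ i => (i : ℝ) / N - c) (1 / N) (-1 / N)
    _ = _ := integral_congr_ae (Eventually.of_forall fun ω => by dsimp only; ring)

theorem integral_le_of_le (hm : IsSIRModel μ N h lam gam S I R X Y) (k : ℕ) {f : Ω → ℝ}
    {C a b c ε : ℝ} (hf₀ : ∀ ω, 0 ≤ f ω)
    (hf : ∀ ω, f ω ≤ C * (((S k ω : ℝ) / N - a) ^ 2 + ((I k ω : ℝ) / N - b) ^ 2 + c) + ε) :
    ∫ ω, f ω ∂μ
      ≤ C * (∫ ω, ((S k ω : ℝ) / N - a) ^ 2 ∂μ + ∫ ω, ((I k ω : ℝ) / N - b) ^ 2 ∂μ + c) + ε := by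
  have := hm.isProbabilityMeasure
  have hSint := hm.integrable_comp k fun s _ => ((s : ℝ) / N - a) ^ 2
  have hIint := hm.integrable_comp k fun _ i => ((i : ℝ) / N - b) ^ 2
  have hSI : Integrable (fun ω => ((S k ω : ℝ) / N - a) ^ 2 + ((I k ω : ℝ) / N - b) ^ 2) μ :=
    hSint.add hIint
  have hsum : Integrable (fun ω => ((S k ω : ℝ) / N - a) ^ 2 + ((I k ω : ℝ) / N - b) ^ 2 + c) μ :=
    hSI.add (integrable_const c)
  have hbound : Integrable (fun ω => C * (((S k ω : ℝ) / N - a) ^ 2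
      + ((I k ω : ℝ) / N - b) ^ 2 + c) + ε) μ :=
    (hsum.const_mul C).add (integrable_const ε)
  refine (integral_mono_of_nonneg (.of_forall hf₀) hbound (.of_forall hf)).trans_eq ?_
  rw [integral_add (hsum.const_mul C) (integrable_const ε), integral_const_mul,
    integral_add hSI (integrable_const c), integral_add hSint hIint]
  simp

theorem integral_sq_sub_sirStep_le (hm : IsSIRModel μ N h lam gam S I R X Y) (hN : 0 < N)
    {β : ℝ} (hβ : 0 ≤ β) {x : ℝ × ℝ} (hx : 0 ≤ x) (k : ℕ) :
    let bound := 3 * (1 + x.1 * h * (1 + β)) ^ 2 * (∫ ω, ((S k ω : ℝ) / N - x.1) ^ 2 ∂μ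
      + ∫ ω, ((I k ω : ℝ) / N - x.2) ^ 2 ∂μ + (N * lam - β) ^ 2) + 1 / (2 * N)
    ∫ ω, ((S (k + 1) ω : ℝ) / N - (sirStep (β * h) (gam * h) x).1) ^ 2 ∂μ ≤ bound ∧
      ∫ ω, ((I (k + 1) ω : ℝ) / N - (sirStep (β * h) (gam * h) x).2) ^ 2 ∂μ ≤ bound := by
  have hh := hm.h_pos.le
  have hvar : ∀ {s : ℕ}, s ≤ N → ∀ {p : ℝ}, p ∈ Set.Icc (0 : ℝ) 1 →
      0 ≤ s * p * (1 - p) / (N : ℝ) ^ 2 := fun hs _ hp =>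
    (natCast_mul_mul_one_sub_div_sq_mem_Icc hs hp).1
  have hp := fun ω => infectionProb_mem_Icc hm.lam_nonneg hh (I k ω)
  have hq := recoveryProb_mem_Icc hm.gam_pos.le hh
  exact ⟨(hm.integral_sq_S_succ_sub k _).trans_le (hm.integral_le_of_le k
      (fun ω => add_nonneg (sq_nonneg _) (hvar (hm.S_le k ω) (hp ω)))
      fun ω => sq_sub_sirStep_fst_add_le hh hβ hm.lam_nonneg hN (hm.S_le k ω) (hm.I_le k ω) hx),
    (hm.integral_sq_I_succ_sub k _).trans_le (hm.integral_le_of_le k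
      (fun ω => add_nonneg (sq_nonneg _)
        (add_nonneg (hvar (hm.S_le k ω) (hp ω)) (hvar (hm.I_le k ω) hq)))
      fun ω => sq_sub_sirStep_snd_add_le hh hβ hm.lam_nonneg hm.gam_pos.le hN (hm.S_le k ω)
        (hm.I_le k ω) hx)⟩

end IsSIRModel

theorem tendsto_integral_sq_sub_sirStep_iterate {Ω : ℕ → Type*} {mΩ : ∀ N, MeasurableSpace (Ω N)}
    {μ : ∀ N, Measure (Ω N)} {h gam β : ℝ} {lam : ℕ → ℝ} {S I R : ∀ N, ℕ → Ω N → ℕ}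
    {X Y : ∀ N, ℕ → ℕ → Ω N → ℕ}
    (hmodel : ∀ N, IsSIRModel (μ N) N h (lam N) gam (S N) (I N) (R N) (X N) (Y N))
    (hβ : 0 ≤ β) (hNlam : Tendsto (fun N : ℕ => (N : ℝ) * lam N) atTop (nhds β))
    {x₀ : ℝ × ℝ} (hx₀ : 0 ≤ x₀)
    (hS₀ : Tendsto (fun N : ℕ => ∫ ω, ((S N 0 ω : ℝ) / N - x₀.1) ^ 2 ∂μ N) atTop (nhds 0))
    (hI₀ : Tendsto (fun N : ℕ => ∫ ω, ((I N 0 ω : ℝ) / N - x₀.2) ^ 2 ∂μ N) atTop (nhds 0))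
    (n : ℕ) :
    Tendsto (fun N : ℕ => ∫ ω, ((S N n ω : ℝ) / N - ((sirStep (β * h) (gam * h))^[n] x₀).1) ^ 2
      ∂μ N) atTop (nhds 0) ∧
    Tendsto (fun N : ℕ => ∫ ω, ((I N n ω : ℝ) / N - ((sirStep (β * h) (gam * h))^[n] x₀).2) ^ 2
      ∂μ N) atTop (nhds 0) := by
  induction n with
  | zero => exact ⟨hS₀, hI₀⟩
  | succ n ih =>
    set x := (sirStep (β * h) (gam * h))^[n] x₀
    have hx : 0 ≤ x := sirStep_iterate_nonneg (mul_nonneg hβ (hmodel 0).h_pos.le) hx₀ n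
    have hbound : Tendsto (fun N : ℕ => 3 * (1 + x.1 * h * (1 + β)) ^ 2
        * (∫ ω, ((S N n ω : ℝ) / N - x.1) ^ 2 ∂μ N + ∫ ω, ((I N n ω : ℝ) / N - x.2) ^ 2 ∂μ N
          + (N * lam N - β) ^ 2) + 1 / (2 * N)) atTop (nhds 0) := by
      have hhalf : Tendsto (fun N : ℕ => 1 / (2 * (N : ℝ))) atTop (nhds 0) :=
        (tendsto_const_div_atTop_nhds_zero_nat (1 / 2)).congr fun N => (div_mul_eq_div_div ..).symm
      simpa using ((ih.1.add ih.2).add ((hNlam.sub_const β).pow 2)).const_mul _ |>.add hhalf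
    have hstep := (eventually_gt_atTop 0).mono fun N hN =>
      (hmodel N).integral_sq_sub_sirStep_le hN hβ hx n
    rw [Function.iterate_succ_apply']
    exact ⟨squeeze_zero' (.of_forall fun N => integral_nonneg fun ω => sq_nonneg _)
        (hstep.mono fun _ hle => hle.1) hbound,
      squeeze_zero' (.of_forall fun N => integral_nonneg fun ω => sq_nonneg _)
        (hstep.mono fun _ hle => hle.2) hbound⟩

theorem sir_mean_field_convergence_general
    (h gam : ℝ)
    (Ω : ℕ → Type) (mΩ : ∀ N, MeasurableSpace (Ω N)) (μ : ∀ N, Measure (Ω N))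
    (lam : ℕ → ℝ)
    (S I R : ∀ N, ℕ → Ω N → ℕ) (X Y : ∀ N, ℕ → ℕ → Ω N → ℕ)
    (hmodel : ∀ N, IsSIRModel (μ N) N h (lam N) gam (S N) (I N) (R N) (X N) (Y N))
    (β : ℝ)
    (hNlam : Filter.Tendsto (fun N : ℕ => (N : ℝ) * lam N) Filter.atTop (nhds β))
    (s₀ i₀ : ℝ)
    (hS0 : Filter.Tendsto (fun N : ℕ => ∫ ω, (S N 0 ω : ℝ) / N ∂(μ N))
      Filter.atTop (nhds s₀))
    (hI0 : Filter.Tendsto (fun N : ℕ => ∫ ω, (I N 0 ω : ℝ) / N ∂(μ N))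
      Filter.atTop (nhds i₀)) :
    ∀ n : ℕ, ∃ s_n i_n : ℝ,
      Filter.Tendsto (fun N : ℕ => ∫ ω, (S N n ω : ℝ) / N ∂(μ N))
        Filter.atTop (nhds s_n) ∧
      Filter.Tendsto (fun N : ℕ => ∫ ω, (I N n ω : ℝ) / N ∂(μ N))
        Filter.atTop (nhds i_n) ∧
      (∀ ε : ℝ, 0 < ε →
        Filter.Tendsto (fun N : ℕ => μ N {ω | ε < |(S N n ω : ℝ) / N - s_n|})
          Filter.atTop (nhds 0)) ∧
      (∀ ε : ℝ, 0 < ε →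
        Filter.Tendsto (fun N : ℕ => μ N {ω | ε < |(I N n ω : ℝ) / N - i_n|})
          Filter.atTop (nhds 0)) := by
  intro n
  have := fun N => (hmodel N).isProbabilityMeasure
  have hβ : 0 ≤ β := ge_of_tendsto' hNlam fun N => mul_nonneg N.cast_nonneg (hmodel N).lam_nonneg
  have hx₀ : (0 : ℝ × ℝ) ≤ (s₀, i₀) :=
    ⟨ge_of_tendsto' hS0 fun N => integral_nonneg fun ω => by positivity,
      ge_of_tendsto' hI0 fun N => integral_nonneg fun ω => by positivity⟩
  obtain ⟨hS, hI⟩ := tendsto_integral_sq_sub_sirStep_iterate hmodel hβ hNlam hx₀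
    (tendsto_integral_sq_sub_of_forall_eq (fun N ω ω' => by rw [(hmodel N).S_zero_eq ω ω']) hS0)
    (tendsto_integral_sq_sub_of_forall_eq (fun N ω ω' => by rw [(hmodel N).I_zero_eq ω ω']) hI0) n
  have hSL2 N : MemLp (fun ω => (S N n ω : ℝ) / N) 2 (μ N) :=
    (hmodel N).memLp_comp n fun s _ => (s : ℝ) / N
  have hIL2 N : MemLp (fun ω => (I N n ω : ℝ) / N) 2 (μ N) :=
    (hmodel N).memLp_comp n fun _ i => (i : ℝ) / N
  exact ⟨_, _, tendsto_integral_of_tendsto_integral_sq_sub hSL2 hS,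
    tendsto_integral_of_tendsto_integral_sq_sub hIL2 hI,
    fun ε hε => tendsto_measure_lt_abs_sub_of_tendsto_integral_sq_sub hSL2 hS hε,
    fun ε hε => tendsto_measure_lt_abs_sub_of_tendsto_integral_sq_sub hIL2 hI hε⟩

/-- Fix `h > 0` and `γ > 0` and, for each population size `N`, an instance of
the discrete stochastic SIR model with infection parameter `λ(N) ≥ 0` such that `N·λ(N) → β ≥ 0`
and the deterministic initial proportions converge: `𝔼[S₀/N] → s₀ > 0`, `𝔼[I₀/N] → i₀ > 0`.
Then for every `n` there are reals `s_n, i_n` with `𝔼[S_n/N] → s_n`, `𝔼[I_n/N] → i_n`, and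
`S_n/N → s_n`, `I_n/N → i_n` in probability, as `N → ∞`. -/
theorem sir_mean_field_convergence
    (h gam : ℝ) (hh : 0 < h) (hgam : 0 < gam)
    (Ω : ℕ → Type) (mΩ : ∀ N, MeasurableSpace (Ω N)) (μ : ∀ N, Measure (Ω N))
    (lam : ℕ → ℝ)
    (S I R : ∀ N, ℕ → Ω N → ℕ) (X Y : ∀ N, ℕ → ℕ → Ω N → ℕ)
    (hmodel : ∀ N, IsSIRModel (μ N) N h (lam N) gam (S N) (I N) (R N) (X N) (Y N))
    (β : ℝ) (hβ : 0 ≤ β)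
    (hNlam : Filter.Tendsto (fun N : ℕ => (N : ℝ) * lam N) Filter.atTop (nhds β))
    (s₀ i₀ : ℝ) (hs₀ : 0 < s₀) (hi₀ : 0 < i₀)
    (hS0 : Filter.Tendsto (fun N : ℕ => ∫ ω, (S N 0 ω : ℝ) / N ∂(μ N))
      Filter.atTop (nhds s₀))
    (hI0 : Filter.Tendsto (fun N : ℕ => ∫ ω, (I N 0 ω : ℝ) / N ∂(μ N))
      Filter.atTop (nhds i₀)) :
    ∀ n : ℕ, ∃ s_n i_n : ℝ,
      Filter.Tendsto (fun N : ℕ => ∫ ω, (S N n ω : ℝ) / N ∂(μ N))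
        Filter.atTop (nhds s_n) ∧
      Filter.Tendsto (fun N : ℕ => ∫ ω, (I N n ω : ℝ) / N ∂(μ N))
        Filter.atTop (nhds i_n) ∧
      (∀ ε : ℝ, 0 < ε →
        Filter.Tendsto (fun N : ℕ => μ N {ω | ε < |(S N n ω : ℝ) / N - s_n|})
          Filter.atTop (nhds 0)) ∧
      (∀ ε : ℝ, 0 < ε →
        Filter.Tendsto (fun N : ℕ => μ N {ω | ε < |(I N n ω : ℝ) / N - i_n|})
          Filter.atTop (nhds 0)) :=
  sir_mean_field_convergence_general h gam Ω mΩ μ lam S I R X Y hmodel β hNlam s₀ i₀ hS0 hI0
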